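/- Main theorem: Let X^n be uniform on {0,1}^n and Y^n = X^n ⊕ Z^n with Z^n i.i.d. Bernoulli(α), α ∈ [0,1/2], independent of X^n. Then for every function f : {0,1}^n → {0,1}^{n−1}, I(f(X^n); Y^n) ≤ (n−1)·(1 − h(α)), with equality for f(x^n) = (x_1,...,x_{n−1}). -/

import Mathlib

/-- Binary entropy function (in bits). -/
noncomputable def binEnt (a : ℝ) : ℝ :=
  -(a * Real.logb 2 a) - ((1 - a) * Real.logb 2 (1 - a))

/-- BSC(α) transition kernel over `{0,1}^n`. -/
noncomputable def bscK {n : ℕ} (α : ℝ) (x y : Fin n → Bool) : ℝ :=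
  ∏ i, (if y i = x i then 1 - α else α)

/-- Joint pmf of `(f(X^n), Y^n)` with `X^n` uniform on `{0,1}^n` and
`Y^n = X^n ⊕ Z^n`, `Z^n` i.i.d. Bernoulli(α). -/
noncomputable def jointPMF {n : ℕ} (f : (Fin n → Bool) → (Fin (n-1) → Bool))
    (α : ℝ) (j : Fin (n-1) → Bool) (y : Fin n → Bool) : ℝ :=
  ((2 : ℝ) ^ n)⁻¹ * ∑ x ∈ Finset.univ.filter (fun x => f x = j), bscK α x y

/-- Marginal of `f(X^n)`. -/
noncomputable def margJ {n : ℕ} (f : (Fin n → Bool) → (Fin (n-1) → Bool))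
    (α : ℝ) (j : Fin (n-1) → Bool) : ℝ :=
  ∑ y, jointPMF f α j y

/-- Marginal of `Y^n`. -/
noncomputable def margY {n : ℕ} (f : (Fin n → Bool) → (Fin (n-1) → Bool))
    (α : ℝ) (y : Fin n → Bool) : ℝ :=
  ∑ j, jointPMF f α j y

/-- Mutual information `I(f(X^n); Y^n)` in bits. -/
noncomputable def mutInfo {n : ℕ} (f : (Fin n → Bool) → (Fin (n-1) → Bool))
    (α : ℝ) : ℝ :=
  ∑ j, ∑ y, jointPMF f α j y *
    Real.logb 2 (jointPMF f α j y / (margJ f α j * margY f α y))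

open Real Finset

/-!
Work in nats. Since `Y` is uniform, `I(f(X); Y)` is an affine function of the output entropies
`∑ y, negMulLog (q_j y)` of the fibres `S_j = f⁻¹(j)`, where `q_j y = ∑ x ∈ S_j, P(y | x)`.
The key estimate: feeding the BSC with input multiplicities `w` of total mass `W` and support
size `s` gives output entropy at least `negMulLog W + n h(α) W + 2 (log 2 - h(α)) (s - 1)`.
It is proved by induction on `n`, splitting off the first coordinate: for every output `y`,
concavity of `h` between `α` and `1/2` gains `2 (log 2 - h(α)) min(u, v)` over merging the two
output weights `u, v`, and merging the two halves of `w` shrinks the support by at most the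
total of those minima. Summing the estimate over the `2ⁿ⁻¹` fibres, of total size `2ⁿ`, gives
the bound. For the projection every fibre is a pair `{(j, 0), (j, 1)}` whose output law is that
of `j` on the first `n - 1` bits, and the bound is attained.
-/

lemma binEnt_eq_binEntropy_div_log_two (a : ℝ) : binEnt a = binEntropy a / log 2 := by
  simp only [binEnt, binEntropy, logb, log_inv]
  ring

theorem Fin.sum_univ_pi_cons {n : ℕ} {β M : Type*} [Fintype β] [AddCommMonoid M]
    (g : (Fin (n + 1) → β) → M) : ∑ y, g y = ∑ b, ∑ y : Fin n → β, g (Fin.cons b y) :=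
  (Fintype.sum_equiv (Fin.consEquiv fun _ => β) _ _ fun _ => rfl).symm.trans
    (Fintype.sum_prod_type _)

theorem Fin.sum_univ_pi_snoc {n : ℕ} {β M : Type*} [Fintype β] [AddCommMonoid M]
    (g : (Fin (n + 1) → β) → M) : ∑ y, g y = ∑ b, ∑ y : Fin n → β, g (Fin.snoc y b) :=
  (Fintype.sum_equiv (Fin.snocEquiv fun _ => β) _ _ fun _ => rfl).symm.trans
    (Fintype.sum_prod_type _)

lemma negMulLog_add_le_negMulLog_bsc {α u v : ℝ} (hα₀ : 0 ≤ α) (hα₁ : α ≤ 1)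
    (hu : 0 ≤ u) (hv : 0 ≤ v) :
    negMulLog (u + v) + binEntropy α * (u + v) + 2 * (log 2 - binEntropy α) * min u v ≤
      negMulLog ((1 - α) * u + α * v) + negMulLog (α * u + (1 - α) * v) := by
  wlog huv : u ≤ v generalizing u v
  · have := this hv hu (le_of_not_ge huv)
    rw [min_comm, add_comm v u, add_comm ((1 - α) * v), add_comm (α * v)] at this
    linarith
  rcases (add_nonneg hu hv).eq_or_lt with hs | hs
  · obtain ⟨rfl, rfl⟩ : u = 0 ∧ v = 0 := ⟨by linarith, by linarith⟩
    simp
  -- with `p = u / (u + v) ≤ 1/2`, the two outputs are `(u + v) • (t, 1 - t)` for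
  -- `t = (1 - 2p) α + 2p • 1/2`, and concavity bounds `binEntropy t`
  obtain ⟨p, hp₀, hp₁, hsp⟩ : ∃ p : ℝ, 0 ≤ 2 * p ∧ 2 * p ≤ 1 ∧ (u + v) * p = u :=
    ⟨u / (u + v), by positivity, by rw [← mul_div_assoc, div_le_one hs]; linarith,
      mul_div_cancel₀ u hs.ne'⟩
  have hconc := strictConcave_binEntropy.concaveOn.2 (⟨hα₀, hα₁⟩ : α ∈ Set.Icc 0 1)
    (⟨by norm_num, by norm_num⟩ : (2 : ℝ)⁻¹ ∈ Set.Icc 0 1) (sub_nonneg.2 hp₁) hp₀ (by ring)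
  set t := (1 - 2 * p) • α + (2 * p) • (2 : ℝ)⁻¹
  simp only [smul_eq_mul, binEntropy_two_inv] at hconc
  have h₀ : (1 - α) * u + α * v = (u + v) * t := by
    simp only [t, smul_eq_mul]; linear_combination (2 * α - 1) * hsp
  have h₁ : α * u + (1 - α) * v = (u + v) * (1 - t) := by
    simp only [t, smul_eq_mul]; linear_combination (1 - 2 * α) * hsp
  have hHt : (u + v) * binEntropy t = (u + v) * negMulLog t + (u + v) * negMulLog (1 - t) := by
    rw [binEntropy_eq_negMulLog_add_negMulLog_one_sub, mul_add]
  rw [min_eq_left huv, h₀, h₁, negMulLog_mul, negMulLog_mul]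
  have hsH : (u + v) * p * (log 2 - binEntropy α) = u * (log 2 - binEntropy α) := by rw [hsp]
  linarith [mul_le_mul_of_nonneg_left hconc hs.le]

section Channel

variable {n : ℕ} (α : ℝ)

lemma bscK_comm (x y : Fin n → Bool) : bscK α x y = bscK α y x := by
  simp only [bscK, eq_comm]

@[simp]
lemma sum_bscK_right (x : Fin n → Bool) : ∑ y, bscK α x y = 1 := by
  unfold bscK
  rw [← Fintype.prod_sum (fun i b => if b = x i then 1 - α else α)]
  refine prod_eq_one fun i _ => ?_
  cases x i <;> simp

@[simp]
lemma sum_bscK_left (y : Fin n → Bool) : ∑ x, bscK α x y = 1 := by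
  simp_rw [bscK_comm α _ y, sum_bscK_right]

lemma bscK_cons (a b : Bool) (x y : Fin n → Bool) :
    bscK α (Fin.cons a x) (Fin.cons b y) = (if b = a then 1 - α else α) * bscK α x y := by
  simp only [bscK, Fin.prod_univ_succ, Fin.cons_zero, Fin.cons_succ]

lemma bscK_snoc (a b : Bool) (x y : Fin n → Bool) :
    bscK α (Fin.snoc x a) (Fin.snoc y b) = (if b = a then 1 - α else α) * bscK α x y := by
  simp only [bscK, Fin.prod_univ_castSucc, Fin.snoc_castSucc, Fin.snoc_last, mul_comm]

lemma sum_negMulLog_bscK (x : Fin n → Bool) :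
    ∑ y, negMulLog (bscK α x y) = n * binEntropy α := by
  induction n with
  | zero => simp [bscK]
  | succ n ih =>
    cases x using Fin.consCases with
    | cons a x =>
      simp only [Fin.sum_univ_pi_cons, bscK_cons, negMulLog_mul, sum_add_distrib, ← mul_sum,
        ← sum_mul, ih, sum_bscK_right, Fintype.sum_bool]
      cases a <;>
        simp only [Bool.true_eq_false, Bool.false_eq_true, ↓reduceIte, one_mul, add_sub_cancel,
          sub_add_cancel, binEntropy_eq_negMulLog_add_negMulLog_one_sub, Nat.cast_add,
          Nat.cast_one] <;>
        ring

noncomputable def bscOut (w : (Fin n → Bool) → ℕ) (y : Fin n → Bool) : ℝ :=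
  ∑ x, (w x : ℝ) * bscK α x y

lemma bscOut_add (w w' : (Fin n → Bool) → ℕ) (y : Fin n → Bool) :
    bscOut α (w + w') y = bscOut α w y + bscOut α w' y := by
  simp only [bscOut, Pi.add_apply, Nat.cast_add, add_mul, sum_add_distrib]

lemma sum_bscOut (w : (Fin n → Bool) → ℕ) : ∑ y, bscOut α w y = ∑ x, (w x : ℝ) := by
  simp only [bscOut, sum_comm (γ := Fin n → Bool), ← mul_sum, sum_bscK_right, mul_one]

lemma bscOut_cons (w : (Fin (n + 1) → Bool) → ℕ) (b : Bool) (y : Fin n → Bool) :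
    bscOut α w (Fin.cons b y) =
      (if b = false then 1 - α else α) * bscOut α (fun x => w (Fin.cons false x)) y +
      (if b = true then 1 - α else α) * bscOut α (fun x => w (Fin.cons true x)) y := by
  simp only [bscOut, Fin.sum_univ_pi_cons, Fintype.sum_bool, bscK_cons, mul_sum]
  rw [add_comm]
  congr 1 <;> exact sum_congr rfl fun _ _ => by ring

variable {α}

lemma bscK_nonneg (hα₀ : 0 ≤ α) (hα₁ : α ≤ 1) (x y : Fin n → Bool) :
    0 ≤ bscK α x y :=
  prod_nonneg fun i _ => by split_ifs <;> linarith

lemma bscOut_nonneg (hα₀ : 0 ≤ α) (hα₁ : α ≤ 1) (w : (Fin n → Bool) → ℕ) (y : Fin n → Bool) :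
    0 ≤ bscOut α w y :=
  sum_nonneg fun x _ => mul_nonneg (Nat.cast_nonneg _) (bscK_nonneg hα₀ hα₁ x y)

lemma bscOut_mono (hα₀ : 0 ≤ α) (hα₁ : α ≤ 1) {w w' : (Fin n → Bool) → ℕ} (h : w ≤ w')
    (y : Fin n → Bool) : bscOut α w y ≤ bscOut α w' y :=
  sum_le_sum fun x _ => mul_le_mul_of_nonneg_right (by exact_mod_cast h x)
    (bscK_nonneg hα₀ hα₁ x y)

end Channel

lemma card_ne_zero_add_card_ne_zero_le {ι : Type*} [Fintype ι] (a b : ι → ℕ) :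
    #{x | a x ≠ 0} + #{x | b x ≠ 0} ≤ #{x | (a + b) x ≠ 0} + ∑ x, (a ⊓ b) x := by
  simp only [card_filter, ← sum_add_distrib]
  refine sum_le_sum fun x _ => ?_
  simp only [Pi.add_apply, Pi.inf_apply]
  split_ifs <;> omega

lemma card_ne_zero_cons {n : ℕ} (w : (Fin (n + 1) → Bool) → ℕ) :
    #{x | w x ≠ 0} = #{x | w (Fin.cons false x) ≠ 0} + #{x | w (Fin.cons true x) ≠ 0} := by
  simp only [card_filter, Fin.sum_univ_pi_cons, Fintype.sum_bool, add_comm]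

section OutputEntropy

variable {α : ℝ}

theorem negMulLog_add_le_sum_negMulLog_bscOut (hα₀ : 0 ≤ α) (hα₁ : α ≤ 1) {n : ℕ}
    (w : (Fin n → Bool) → ℕ) :
    negMulLog (∑ x, (w x : ℝ)) + n * binEntropy α * ∑ x, (w x : ℝ) +
        2 * (log 2 - binEntropy α) * (#{x | w x ≠ 0} - 1) ≤
      ∑ y, negMulLog (bscOut α w y) := by
  have hgap : 0 ≤ log 2 - binEntropy α := sub_nonneg.2 binEntropy_le_log_two
  induction n with
  | zero =>
    have hcard : (#{x | w x ≠ 0} : ℝ) ≤ 1 := by exact_mod_cast card_le_univ _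
    simp only [bscOut, bscK, univ_eq_empty, prod_empty, mul_one, Fintype.sum_unique,
      Nat.cast_zero, zero_mul, add_zero]
    linarith [mul_nonneg hgap (sub_nonneg.2 hcard)]
  | succ n ih =>
    set w₀ : (Fin n → Bool) → ℕ := fun x => w (Fin.cons false x)
    set w₁ : (Fin n → Bool) → ℕ := fun x => w (Fin.cons true x)
    have hW : ∑ x, (w x : ℝ) = ∑ x, ((w₀ + w₁) x : ℝ) := by
      simp [w₀, w₁, Fin.sum_univ_pi_cons, sum_add_distrib, add_comm]
    have hsplit : ∑ y, negMulLog (bscOut α w y) = ∑ y, (negMulLog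
        ((1 - α) * bscOut α w₀ y + α * bscOut α w₁ y) +
          negMulLog (α * bscOut α w₀ y + (1 - α) * bscOut α w₁ y)) := by
      simp [Fin.sum_univ_pi_cons, bscOut_cons, w₀, w₁, sum_add_distrib,
        add_comm]
    have hpair := sum_le_sum fun y (_ : y ∈ univ) =>
      negMulLog_add_le_negMulLog_bsc hα₀ hα₁ (bscOut_nonneg hα₀ hα₁ w₀ y)
        (bscOut_nonneg hα₀ hα₁ w₁ y)
    have hmin : ∑ x, ((w₀ ⊓ w₁) x : ℝ) ≤ ∑ y, min (bscOut α w₀ y) (bscOut α w₁ y) := by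
      rw [← sum_bscOut α]
      exact sum_le_sum fun y _ => le_min (bscOut_mono hα₀ hα₁ inf_le_left y)
        (bscOut_mono hα₀ hα₁ inf_le_right y)
    have hcard : (#{x | w x ≠ 0} : ℝ) ≤ #{x | (w₀ + w₁) x ≠ 0} + ∑ x, ((w₀ ⊓ w₁) x : ℝ) := by
      rw [card_ne_zero_cons]
      exact_mod_cast card_ne_zero_add_card_ne_zero_le w₀ w₁
    have hgain := mul_le_mul_of_nonneg_left (hcard.trans (add_le_add_right hmin _)) hgap
    simp only [sum_add_distrib, ← bscOut_add, ← mul_sum, sum_bscOut] at hpair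
    rw [hsplit, sum_add_distrib, hW]
    push_cast
    linarith [ih (w₀ + w₁)]

theorem negMulLog_card_add_le_sum_negMulLog (hα₀ : 0 ≤ α) (hα₁ : α ≤ 1) {n : ℕ}
    (S : Finset (Fin n → Bool)) :
    negMulLog #S + n * binEntropy α * #S + 2 * (log 2 - binEntropy α) * (#S - 1) ≤
      ∑ y, negMulLog (∑ x ∈ S, bscK α x y) := by
  simpa [bscOut, Nat.cast_ite, ite_mul, sum_ite_mem, filter_mem_eq_inter]
    using negMulLog_add_le_sum_negMulLog_bscOut hα₀ hα₁ fun x => if x ∈ S then 1 else 0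

end OutputEntropy

lemma mul_logb_div_eq {N q m : ℝ} (hN : 0 < N) (hm : q ≠ 0 → m ≠ 0) :
    N⁻¹ * q * logb 2 (N⁻¹ * q / (N⁻¹ * m * N⁻¹)) =
      (N * log 2)⁻¹ * (q * (log N - log m) - negMulLog q) := by
  rcases eq_or_ne q 0 with rfl | hq
  · simp
  have hm := hm hq
  have hlog : log (N⁻¹ * q / (N⁻¹ * m * N⁻¹)) = log N + log q - log m := by
    rw [show N⁻¹ * q / (N⁻¹ * m * N⁻¹) = N * q / m by field_simp, log_div (by positivity) hm,
      log_mul hN.ne' hq]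
  rw [logb, hlog, negMulLog]
  field_simp
  ring

section MutualInformation

variable {n : ℕ} (f : (Fin n → Bool) → (Fin (n - 1) → Bool)) (α : ℝ)

lemma margY_eq (y : Fin n → Bool) : margY f α y = (2 ^ n)⁻¹ := by
  simp only [margY, jointPMF, ← mul_sum, sum_fiberwise, sum_bscK_left, mul_one]

lemma margJ_eq (j : Fin (n - 1) → Bool) : margJ f α j = (2 ^ n)⁻¹ * #{x | f x = j} := by
  simp only [margJ, jointPMF, ← mul_sum, sum_comm (γ := Fin n → Bool), sum_bscK_right,
    sum_const, nsmul_one]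

lemma mutInfo_eq : mutInfo f α = (2 ^ n * log 2)⁻¹ * ∑ j, (#{x | f x = j} *
    (n * log 2 - log #{x | f x = j}) - ∑ y, negMulLog (∑ x ∈ {x | f x = j}, bscK α x y)) := by
  rw [mutInfo, mul_sum]
  refine sum_congr rfl fun j _ => ?_
  set S : Finset (Fin n → Bool) := {x | f x = j}
  have hmass : ∑ y, ∑ x ∈ S, bscK α x y = #S := by
    rw [sum_comm]; simp
  have hsupp (y : Fin n → Bool) : ∑ x ∈ S, bscK α x y ≠ 0 → (#S : ℝ) ≠ 0 := by
    contrapose!; intro h; simp [card_eq_zero.1 (Nat.cast_eq_zero.1 h)]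
  calc ∑ y, jointPMF f α j y * logb 2 (jointPMF f α j y / (margJ f α j * margY f α y))
      = ∑ y, (2 ^ n * log 2)⁻¹ * ((∑ x ∈ S, bscK α x y) * (n * log 2 - log #S) -
          negMulLog (∑ x ∈ S, bscK α x y)) := by
        refine sum_congr rfl fun y _ => ?_
        rw [margY_eq, margJ_eq, ← Real.log_pow]
        exact mul_logb_div_eq (by positivity) (hsupp y)
    _ = _ := by rw [← mul_sum, sum_sub_distrib, ← sum_mul, hmass]

end MutualInformation

lemma sum_card_fiber {ι κ : Type*} [Fintype ι] [Fintype κ] [DecidableEq κ] (f : ι → κ) :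
    ∑ j, (#{x | f x = j} : ℝ) = Fintype.card ι := by
  exact_mod_cast (card_eq_sum_card_fiberwise fun x _ => mem_univ (f x)).symm

theorem mutInfo_le {n : ℕ} (hn : 1 ≤ n) (f : (Fin n → Bool) → (Fin (n - 1) → Bool)) {α : ℝ}
    (hα₀ : 0 ≤ α) (hα₁ : α ≤ 1) : mutInfo f α ≤ ((n : ℝ) - 1) * (1 - binEnt α) := by
  obtain ⟨N, rfl⟩ := Nat.exists_eq_add_of_le' hn
  have hfiber (j : Fin N → Bool) : #{x | f x = j} * ((N + 1 : ℕ) * log 2 - log #{x | f x = j}) -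
      ∑ y, negMulLog (∑ x ∈ {x | f x = j}, bscK α x y) ≤
        (log 2 - binEntropy α) * ((N - 1) * #{x | f x = j} + 2) := by
    have := negMulLog_card_add_le_sum_negMulLog hα₀ hα₁ {x | f x = j}
    rw [negMulLog] at this
    push_cast at this ⊢
    linarith
  calc mutInfo f α
      ≤ (2 ^ (N + 1) * log 2)⁻¹ * ∑ j, (log 2 - binEntropy α) * ((N - 1) * #{x | f x = j} + 2) :=
        (mutInfo_eq f α).trans_le <| mul_le_mul_of_nonneg_left (sum_le_sum fun j _ => hfiber j)
          (by positivity)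
    _ = ((N + 1 : ℕ) - 1) * (1 - binEnt α) := by
        simp only [← mul_sum, sum_add_distrib, sum_card_fiber, sum_const, card_univ,
          Fintype.card_fun, Fintype.card_bool, Fintype.card_fin]
        rw [binEnt_eq_binEntropy_div_log_two]
        push_cast
        field_simp
        ring

lemma sum_filter_init_eq {N : ℕ} {β M : Type*} [Fintype β] [DecidableEq β] [AddCommMonoid M]
    (j : Fin N → β) (g : (Fin (N + 1) → β) → M) :
    ∑ x ∈ {x | Fin.init x = j}, g x = ∑ b, g (Fin.snoc j b) := by
  simp [sum_filter, Fin.sum_univ_pi_snoc, Fin.init_snoc]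

theorem mutInfo_init {n : ℕ} (hn : 1 ≤ n) (α : ℝ) :
    mutInfo (fun x (j : Fin (n - 1)) => x (Fin.castLE (Nat.sub_le n 1) j)) α =
      ((n : ℝ) - 1) * (1 - binEnt α) := by
  obtain ⟨N, rfl⟩ := Nat.exists_eq_add_of_le' hn
  change mutInfo (Fin.init : (Fin (N + 1) → Bool) → Fin N → Bool) α = _
  have hout (j : Fin N → Bool) (y : Fin (N + 1) → Bool) :
      ∑ x ∈ {x | Fin.init x = j}, bscK α x y = bscK α j (Fin.init y) := by
    rw [sum_filter_init_eq, ← Fin.snoc_init_self y]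
    cases y (Fin.last N) <;>
      simp only [Fintype.sum_bool, bscK_snoc, Fin.init_snoc, ↓reduceIte, Bool.true_eq_false,
        Bool.false_eq_true] <;>
      ring
  have hcard (j : Fin N → Bool) : (#{x : Fin (N + 1) → Bool | Fin.init x = j} : ℝ) = 2 := by
    rw [card_eq_sum_ones, sum_filter_init_eq]; simp
  have hent (j : Fin N → Bool) :
      ∑ y, negMulLog (∑ x ∈ {x : Fin (N + 1) → Bool | Fin.init x = j}, bscK α x y) =
        2 * (N * binEntropy α) := by
    simp only [hout, Fin.sum_univ_pi_snoc, Fin.init_snoc, sum_negMulLog_bscK, sum_const,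
      card_univ, Fintype.card_bool, nsmul_eq_mul, Nat.cast_ofNat]
  rw [mutInfo_eq]
  simp only [hcard, hent, sum_const, card_univ, Fintype.card_fun, Fintype.card_bool,
    Fintype.card_fin, binEnt_eq_binEntropy_div_log_two, nsmul_eq_mul, Nat.add_sub_cancel]
  push_cast
  field_simp
  ring

/-- Main theorem: any `(n-1)`-bit quantizer `f` of `X^n` satisfies
`I(f(X^n); Y^n) ≤ (n−1)(1−h(α))`, with equality for the projection onto the
first `n−1` coordinates. -/
theorem main_quantization_bound (n : ℕ) (hn : 1 ≤ n) (α : ℝ)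
    (hα : α ∈ Set.Icc (0:ℝ) (1/2)) :
    (∀ f : (Fin n → Bool) → (Fin (n-1) → Bool),
      mutInfo f α ≤ ((n : ℝ) - 1) * (1 - binEnt α)) ∧
    mutInfo (fun x (j : Fin (n-1)) => x (Fin.castLE (Nat.sub_le n 1) j)) α =
      ((n : ℝ) - 1) * (1 - binEnt α) :=
  ⟨fun f => mutInfo_le hn f hα.1 (hα.2.trans (by norm_num)), mutInfo_init hn α⟩
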